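/- arXiv:2605.11973 — 9 statements merged into one kernel-verified Lean document; each statement's English description precedes it below -/
import Mathlib

section
/- Let μ be a probability measure on an interval J ⊆ ℝ with finite left endpoint x₀, and let φ : J → ℝ be μ-integrable with ∫ φ dμ = 0. Suppose there exists b ∈ J such that φ ≥ 0 on [x₀, b] ∩ J and φ ≤ 0 on [b, sup J) ∩ J (a single sign change from + to −). Then for every x ∈ J with μ([x,∞)) > 0, the conditional tail expectation satisfies ∫_{[x,∞)} φ dμ ≤ 0. -/
open MeasureTheory Set

/-- single sign change (+ to −) with zero mean implies all tail
integrals are nonpositive. -/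
theorem tail_integral_nonpos_of_single_sign_change
    (μ : Measure ℝ) [IsProbabilityMeasure μ]
    (J : Set ℝ) (hJ : J.OrdConnected) (x₀ : ℝ) (hx₀ : IsGLB J x₀)
    (hsupp : μ Jᶜ = 0)
    (φ : ℝ → ℝ) (hφ : Integrable φ μ) (hmean : ∫ x, φ x ∂μ = 0)
    (b : ℝ) (hb : b ∈ J)
    (hpos : ∀ x ∈ J, x ≤ b → 0 ≤ φ x)
    (hneg : ∀ x ∈ J, b ≤ x → φ x ≤ 0) :
    ∀ x ∈ J, 0 < μ (Ici x) → ∫ y in Ici x, φ y ∂μ ≤ 0 := by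
  intro x hx _
  have hJae : ∀ᵐ y ∂μ, y ∈ J := by
    rw [ae_iff]
    exact hsupp
  rcases le_total b x with hbx | hxb
  · -- on Ici x, φ ≤ 0 a.e.
    have h : ∀ᵐ y ∂(μ.restrict (Ici x)), φ y ≤ 0 := by
      filter_upwards [ae_restrict_of_ae hJae,
        ae_restrict_mem measurableSet_Ici] with y hyJ hyx
      exact hneg y hyJ (hbx.trans hyx)
    exact integral_nonpos_of_ae h
  · -- ∫_{Ici x} = -∫_{Iio x} ≤ 0
    have hsplit : (∫ y in Ici x, φ y ∂μ) + ∫ y in (Ici x)ᶜ, φ y ∂μ = ∫ y, φ y ∂μ :=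
      integral_add_compl measurableSet_Ici hφ
    rw [hmean] at hsplit
    have hcompl : (Ici x)ᶜ = Iio x := compl_Ici
    have hIio : 0 ≤ ∫ y in Iio x, φ y ∂μ := by
      refine integral_nonneg_of_ae ?_
      filter_upwards [ae_restrict_of_ae hJae,
        ae_restrict_mem measurableSet_Iio] with y hyJ hyx
      exact hpos y hyJ (le_of_lt (lt_of_lt_of_le hyx hxb))
    rw [hcompl] at hsplit
    linarith
end

section
/- Let μ be a probability measure on an interval J ⊆ ℝ with finite left endpoint x₀, and φ : J → ℝ μ-integrable with ∫ φ dμ = 0. If φ(x₀) < 0 and φ < 0 on some right-neighbourhood (x₀, x₀+ε) ∩ J, then there exists x ∈ J with μ([x,∞)) > 0 and ∫_{[x,∞)} φ dμ > 0. -/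
open MeasureTheory Set

/-- if the mean-zero function φ is negative at the left endpoint
and on a right-neighbourhood charged by μ, then some tail integral is positive. -/
theorem exists_tail_integral_pos_of_neg_at_left_endpoint
    (μ : Measure ℝ) [IsProbabilityMeasure μ]
    (J : Set ℝ) (hJ : J.OrdConnected) (x₀ : ℝ) (hx₀ : IsLeast J x₀)
    (hsupp : μ Jᶜ = 0)
    (φ : ℝ → ℝ) (hφ : Integrable φ μ) (hmean : ∫ x, φ x ∂μ = 0)
    (hφx₀ : φ x₀ < 0)
    (ε : ℝ) (hε : 0 < ε)
    (hnegnb : ∀ x ∈ J, x₀ < x → x < x₀ + ε → φ x < 0)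
    (hmass : 0 < μ (Ioo x₀ (x₀ + ε))) :
    ∃ x ∈ J, 0 < μ (Ici x) ∧ 0 < ∫ y in Ici x, φ y ∂μ := by
  set c := x₀ + ε with hc
  have hJae : ∀ᵐ x ∂μ, x ∈ J := by
    rw [ae_iff]
    exact hsupp
  -- φ is (strictly) negative a.e. on Iio c
  have hnegae : ∀ᵐ x ∂μ.restrict (Iio c), φ x < 0 := by
    filter_upwards [ae_restrict_of_ae hJae, ae_restrict_mem measurableSet_Iio]
      with x hxJ hxlt
    rcases eq_or_lt_of_le (hx₀.2 hxJ) with h | h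
    · rw [← h]; exact hφx₀
    · exact hnegnb x hxJ h hxlt
  have hIiopos : 0 < μ (Iio c) := lt_of_lt_of_le hmass (measure_mono Ioo_subset_Iio_self)
  have hintneg : ∫ y in Iio c, φ y ∂μ < 0 := by
    have hmono : 0 ≤ᵐ[μ.restrict (Iio c)] fun y => -φ y :=
      hnegae.mono fun x hx => by simp; linarith
    have hnn : 0 ≤ ∫ y in Iio c, -φ y ∂μ := integral_nonneg_of_ae hmono
    rcases hnn.lt_or_eq with h | h
    · have hneg : ∫ y in Iio c, -φ y ∂μ = -∫ y in Iio c, φ y ∂μ := integral_neg φ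
      linarith
    · exfalso
      have heq : (fun y => -φ y) =ᵐ[μ.restrict (Iio c)] 0 :=
        (integral_eq_zero_iff_of_nonneg_ae hmono hφ.restrict.neg).mp h.symm
      have hfalse : ∀ᵐ x ∂μ.restrict (Iio c), False := by
        filter_upwards [heq, hnegae] with x h1 h2
        have : -φ x = 0 := h1
        linarith
      have h0 : μ.restrict (Iio c) {x : ℝ | ¬False} = 0 := ae_iff.mp hfalse
      have : μ (Iio c) = 0 := by
        have huniv : {x : ℝ | ¬False} = univ := by simp
        rw [huniv] at h0
        simpa [Measure.restrict_apply_univ] using h0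
      exact absurd this hIiopos.ne'
  have hsplit : ∫ y in Iio c, φ y ∂μ + ∫ y in Ici c, φ y ∂μ = 0 := by
    rw [← hmean]
    have := integral_add_compl (measurableSet_Iio : MeasurableSet (Iio c)) hφ
    simpa [compl_Iio] using this
  have htail : 0 < ∫ y in Ici c, φ y ∂μ := by linarith
  have hmasstail : 0 < μ (Ici c) := by
    rcases eq_or_lt_of_le (show (0:ENNReal) ≤ μ (Ici c) from zero_le) with h | h
    · exfalso
      have hres : μ.restrict (Ici c) = 0 := Measure.restrict_eq_zero.mpr h.symm
      rw [hres, integral_zero_measure] at htail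
      exact lt_irrefl 0 htail
    · exact h
  have hcJ : c ∈ J := by
    have hinter : μ (Ici c ∩ J) = μ (Ici c) := measure_inter_conull hsupp
    have hne : (Ici c ∩ J).Nonempty := by
      apply nonempty_of_measure_ne_zero (μ := μ)
      rw [hinter]
      exact hmasstail.ne'
    obtain ⟨z, hz1, hz2⟩ := hne
    exact hJ.out hx₀.1 hz2 ⟨by linarith [hε], hz1⟩
  exact ⟨c, hcJ, hmasstail, htail⟩
end

section
/- Let P and Q be probability measures on ℝ with densities f_P, f_Q positive exactly on a common interval J with finite left endpoint x₀, and let ℓ = f_P/f_Q. Assume ℓ(x₀) ≥ 1, the set A = {x ∈ J : ℓ(x) ≥ 1} is an interval, and ℓ is nonincreasing on J \ A. Then P ≤_hr Q, i.e., the ratio of survival functions x ↦ P([x,∞))/Q([x,∞)) is nonincreasing on {x ∈ J : Q([x,∞)) > 0}. -/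
open MeasureTheory Set

/-- superlevel-set criterion for the hazard-rate order. -/
theorem hr_order_of_superlevel_criterion
    (P Q : Measure ℝ) [IsProbabilityMeasure P] [IsProbabilityMeasure Q]
    (fP fQ : ℝ → ℝ)
    (hPd : ∀ s : Set ℝ, MeasurableSet s → P s = ENNReal.ofReal (∫ x in s, fP x))
    (hQd : ∀ s : Set ℝ, MeasurableSet s → Q s = ENNReal.ofReal (∫ x in s, fQ x))
    (J : Set ℝ) (hJ : J.OrdConnected) (x₀ : ℝ) (hx₀ : IsLeast J x₀)
    (hfP : ∀ x, 0 < fP x ↔ x ∈ J) (hfQ : ∀ x, 0 < fQ x ↔ x ∈ J)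
    (ℓ : ℝ → ℝ) (hℓ : ∀ x ∈ J, ℓ x = fP x / fQ x)
    (hℓx₀ : 1 ≤ ℓ x₀)
    (hA : ({x ∈ J | 1 ≤ ℓ x}).OrdConnected)
    (hmono : AntitoneOn ℓ (J \ {x ∈ J | 1 ≤ ℓ x})) :
    AntitoneOn (fun x => (P (Ici x)).toReal / (Q (Ici x)).toReal)
      {x ∈ J | 0 < Q (Ici x)} := by
  -- Integrability of the densities
  have hIntP : Integrable fP := by
    by_contra h
    have h1 := hPd univ MeasurableSet.univ
    rw [setIntegral_univ, integral_undef h] at h1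
    simp [measure_univ] at h1
  have hIntQ : Integrable fQ := by
    by_contra h
    have h1 := hQd univ MeasurableSet.univ
    rw [setIntegral_univ, integral_undef h] at h1
    simp [measure_univ] at h1
  -- total mass
  have htotP : ∫ x, fP x = 1 := by
    have h1 := hPd univ MeasurableSet.univ
    rw [setIntegral_univ, measure_univ] at h1
    exact (ENNReal.ofReal_eq_one.mp h1.symm)
  have htotQ : ∫ x, fQ x = 1 := by
    have h1 := hQd univ MeasurableSet.univ
    rw [setIntegral_univ, measure_univ] at h1
    exact (ENNReal.ofReal_eq_one.mp h1.symm)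
  -- nonnegativity of all set integrals
  have hPnn : ∀ s : Set ℝ, MeasurableSet s → 0 ≤ ∫ x in s, fP x := by
    intro s hs
    by_contra h
    push_neg at h
    have hc : (∫ x in s, fP x) + ∫ x in sᶜ, fP x = 1 := by
      rw [integral_add_compl hs hIntP, htotP]
    have h2 : (1:ℝ) < ∫ x in sᶜ, fP x := by linarith
    have h3 : (1:ENNReal) < P sᶜ := by
      rw [hPd sᶜ hs.compl]
      exact_mod_cast (by
        rw [show (1:ENNReal) = ENNReal.ofReal 1 by simp]
        exact (ENNReal.ofReal_lt_ofReal_iff (by linarith)).mpr h2)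
    exact absurd h3 (not_lt.mpr prob_le_one)
  have hQnn : ∀ s : Set ℝ, MeasurableSet s → 0 ≤ ∫ x in s, fQ x := by
    intro s hs
    by_contra h
    push_neg at h
    have hc : (∫ x in s, fQ x) + ∫ x in sᶜ, fQ x = 1 := by
      rw [integral_add_compl hs hIntQ, htotQ]
    have h2 : (1:ℝ) < ∫ x in sᶜ, fQ x := by linarith
    have h3 : (1:ENNReal) < Q sᶜ := by
      rw [hQd sᶜ hs.compl]
      exact_mod_cast (by
        rw [show (1:ENNReal) = ENNReal.ofReal 1 by simp]
        exact (ENNReal.ofReal_lt_ofReal_iff (by linarith)).mpr h2)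
    exact absurd h3 (not_lt.mpr prob_le_one)
  have hJm : MeasurableSet J := hJ.measurableSet
  -- densities vanish a.e. off J
  have vanish : ∀ (f : ℝ → ℝ), Integrable f → (∀ x, 0 < f x ↔ x ∈ J) →
      (∀ s : Set ℝ, MeasurableSet s → 0 ≤ ∫ x in s, f x) →
      ∀ᵐ t, t ∉ J → f t = 0 := by
    intro f hInt hf hnn
    have hle : ∀ x ∈ Jᶜ, f x ≤ 0 := fun x hx =>
      le_of_not_gt fun hpos => hx ((hf x).1 hpos)
    have h0 : ∫ x in Jᶜ, f x = 0 :=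
      le_antisymm (setIntegral_nonpos hJm.compl hle) (hnn Jᶜ hJm.compl)
    have hnonneg : 0 ≤ᵐ[volume.restrict Jᶜ] fun x => -f x := by
      filter_upwards [ae_restrict_mem hJm.compl] with t ht
      simpa using hle t ht
    have hInt' : Integrable (fun x => -f x) (volume.restrict Jᶜ) :=
      (hInt.restrict).neg
    have hz : ∫ x in Jᶜ, -f x = 0 := by
      rw [integral_neg, h0, neg_zero]
    have := (integral_eq_zero_iff_of_nonneg_ae hnonneg hInt').mp hz
    have h2 : ∀ᵐ t ∂volume.restrict Jᶜ, f t = 0 := by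
      filter_upwards [this] with t ht
      simpa using congrArg Neg.neg ht
    exact (ae_restrict_iff' hJm.compl).mp h2
  have hP0 : ∀ᵐ t, t ∉ J → fP t = 0 := vanish fP hIntP hfP hPnn
  have hQ0 : ∀ᵐ t, t ∉ J → fQ t = 0 := vanish fQ hIntQ hfQ hQnn
  -- survival functions as real integrals
  have hPt : ∀ z : ℝ, (P (Ici z)).toReal = ∫ t in Ici z, fP t := fun z => by
    rw [hPd _ measurableSet_Ici, ENNReal.toReal_ofReal (hPnn _ measurableSet_Ici)]
  have hQt : ∀ z : ℝ, (Q (Ici z)).toReal = ∫ t in Ici z, fQ t := fun z => by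
    rw [hQd _ measurableSet_Ici, ENNReal.toReal_ofReal (hQnn _ measurableSet_Ici)]
  -- the main argument
  intro x hx y hy hxy
  obtain ⟨hxJ, hQx⟩ := hx
  obtain ⟨hyJ, hQy⟩ := hy
  have hQxr : 0 < (Q (Ici x)).toReal :=
    ENNReal.toReal_pos hQx.ne' (measure_ne_top _ _)
  have hQyr : 0 < (Q (Ici y)).toReal :=
    ENNReal.toReal_pos hQy.ne' (measure_ne_top _ _)
  simp only
  rw [div_le_div_iff₀ hQyr hQxr]
  set a := ∫ t in Ico x y, fP t with ha
  set b := ∫ t in Ico x y, fQ t with hb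
  set p := ∫ t in Ici y, fP t with hp
  set q := ∫ t in Ici y, fQ t with hq
  have hdisj : Disjoint (Ico x y) (Ici y) := by
    rw [Set.disjoint_left]
    intro t ht ht'
    exact absurd ht.2 (not_lt.mpr ht')
  have hPx : (P (Ici x)).toReal = a + p := by
    rw [hPt, ← Ico_union_Ici_eq_Ici hxy,
      setIntegral_union hdisj measurableSet_Ici hIntP.integrableOn hIntP.integrableOn]
  have hQxv : (Q (Ici x)).toReal = b + q := by
    rw [hQt, ← Ico_union_Ici_eq_Ici hxy,
      setIntegral_union hdisj measurableSet_Ici hIntQ.integrableOn hIntQ.integrableOn]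
  rw [hPx, hQxv, hPt y, hQt y, ← hp, ← hq]
  have hbnn : 0 ≤ b := hQnn _ measurableSet_Ico
  have hann : 0 ≤ a := hPnn _ measurableSet_Ico
  have hpnn : 0 ≤ p := hPnn _ measurableSet_Ici
  have hqnn : 0 ≤ q := hQnn _ measurableSet_Ici
  -- suffices: p * b ≤ a * q
  have key : p * b ≤ a * q := by
    by_cases hyA : 1 ≤ ℓ y
    · -- Case 1: y in the superlevel set A
      have hPQle : ∀ t ∈ J, t ≤ y → fQ t ≤ fP t := by
        intro t htJ hty
        have htA : t ∈ {x ∈ J | 1 ≤ ℓ x} :=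
          hA.out ⟨hx₀.1, hℓx₀⟩ ⟨hyJ, hyA⟩ ⟨hx₀.2 htJ, hty⟩
        have hfQt : 0 < fQ t := (hfQ t).2 htJ
        have := htA.2
        rw [hℓ t htJ] at this
        exact (one_le_div hfQt).mp this
      -- b ≤ a
      have hba : b ≤ a := by
        apply integral_mono_ae hIntQ.restrict hIntP.restrict
        filter_upwards [ae_restrict_of_ae hP0, ae_restrict_of_ae hQ0,
          ae_restrict_mem measurableSet_Ico] with t h1 h2 ht
        by_cases htJ : t ∈ J
        · exact hPQle t htJ ht.2.le
        · rw [h1 htJ, h2 htJ]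
      -- p ≤ q
      have hpq : p ≤ q := by
        have hcP : (∫ t in Iio y, fP t) + p = 1 := by
          have := integral_add_compl (measurableSet_Iio (a := y)) hIntP
          rwa [compl_Iio, htotP] at this
        have hcQ : (∫ t in Iio y, fQ t) + q = 1 := by
          have := integral_add_compl (measurableSet_Iio (a := y)) hIntQ
          rwa [compl_Iio, htotQ] at this
        have hIio : ∫ t in Iio y, fQ t ≤ ∫ t in Iio y, fP t := by
          apply integral_mono_ae hIntQ.restrict hIntP.restrict
          filter_upwards [ae_restrict_of_ae hP0, ae_restrict_of_ae hQ0,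
            ae_restrict_mem measurableSet_Iio] with t h1 h2 ht
          by_cases htJ : t ∈ J
          · exact hPQle t htJ (le_of_lt ht)
          · rw [h1 htJ, h2 htJ]
        linarith
      nlinarith [hpq, hba, hbnn, hpnn, hqnn, hann]
    · -- Case 2: y outside A, use monotonicity of ℓ
      have hyJA : y ∈ J \ {x ∈ J | 1 ≤ ℓ x} := ⟨hyJ, fun h => hyA h.2⟩
      have hℓy_lt : ℓ y < 1 := lt_of_not_ge hyA
      have hℓynn : 0 ≤ ℓ y := by
        rw [hℓ y hyJ]
        exact div_nonneg (le_of_lt ((hfP y).2 hyJ)) (le_of_lt ((hfQ y).2 hyJ))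
      -- fP t ≤ ℓ y * fQ t on [y, ∞) ∩ J
      have hub : ∀ t ∈ J, y ≤ t → fP t ≤ ℓ y * fQ t := by
        intro t htJ hyt
        have hfQt : 0 < fQ t := (hfQ t).2 htJ
        have heq : fP t = ℓ t * fQ t := by
          rw [hℓ t htJ, div_mul_cancel₀ _ hfQt.ne']
        rcases eq_or_lt_of_le hyt with rfl | hlt
        · rw [heq]
        · have htA : t ∉ {x ∈ J | 1 ≤ ℓ x} := by
            intro htA
            exact hyA (hA.out ⟨hx₀.1, hℓx₀⟩ htA ⟨hx₀.2 hyJ, hlt.le⟩).2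
          have : ℓ t ≤ ℓ y := hmono hyJA ⟨htJ, htA⟩ hyt
          rw [heq]
          exact mul_le_mul_of_nonneg_right this hfQt.le
      -- ℓ y * fQ t ≤ fP t on (-∞, y) ∩ J
      have hlb : ∀ t ∈ J, t < y → ℓ y * fQ t ≤ fP t := by
        intro t htJ hty
        have hfQt : 0 < fQ t := (hfQ t).2 htJ
        by_cases htA : 1 ≤ ℓ t
        · have h1 : fQ t ≤ fP t := by
            have := htA
            rw [hℓ t htJ] at this
            exact (one_le_div hfQt).mp this
          nlinarith
        · have h2 : ℓ y ≤ ℓ t := hmono ⟨htJ, fun h => htA h.2⟩ hyJA hty.le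
          have heq : fP t = ℓ t * fQ t := by
            rw [hℓ t htJ, div_mul_cancel₀ _ hfQt.ne']
          rw [heq]
          exact mul_le_mul_of_nonneg_right h2 hfQt.le
      -- p ≤ ℓ y * q
      have hpQ : p ≤ ℓ y * q := by
        have : p ≤ ∫ t in Ici y, ℓ y * fQ t := by
          apply integral_mono_ae hIntP.restrict (hIntQ.restrict.const_mul _)
          filter_upwards [ae_restrict_of_ae hP0, ae_restrict_of_ae hQ0,
            ae_restrict_mem measurableSet_Ici] with t h1 h2 ht
          by_cases htJ : t ∈ J
          · exact hub t htJ ht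
          · rw [h1 htJ, h2 htJ, mul_zero]
        rwa [integral_const_mul] at this
      -- ℓ y * b ≤ a
      have haB : ℓ y * b ≤ a := by
        have : ∫ t in Ico x y, ℓ y * fQ t ≤ a := by
          apply integral_mono_ae (hIntQ.restrict.const_mul _) hIntP.restrict
          filter_upwards [ae_restrict_of_ae hP0, ae_restrict_of_ae hQ0,
            ae_restrict_mem measurableSet_Ico] with t h1 h2 ht
          by_cases htJ : t ∈ J
          · exact hlb t htJ ht.2
          · rw [h1 htJ, h2 htJ, mul_zero]
        rwa [integral_const_mul] at this
      nlinarith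
  nlinarith
end

section
/- Let P and Q be probability measures on ℝ with densities f_P, f_Q positive on a common interval J = supp(P) ∪ supp(Q) with finite left endpoint x₀, and suppose the likelihood ratio ℓ = f_P/f_Q is unimodal on J (nondecreasing up to some mode, then nonincreasing). If the right limit ℓ(x₀+) ≥ 1, then P ≤_st Q. -/
open MeasureTheory Set Filter

lemma aux_decomp (μ : Measure ℝ) (f : ℝ → ℝ) (J : Set ℝ) (hJm : MeasurableSet J)
    (hd : ∀ s : Set ℝ, MeasurableSet s → μ s = ENNReal.ofReal (∫ x in s, f x))
    (hpos : ∀ x, 0 < f x ↔ x ∈ J) (s : Set ℝ) (hs : MeasurableSet s) :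
    μ s = ENNReal.ofReal (∫ x in s ∩ J, f x) := by
  have h1 : μ (s ∩ J) + μ (s \ J) = μ s := measure_inter_add_diff s hJm
  have h2 : μ (s \ J) = 0 := by
    rw [hd _ (hs.diff hJm), ENNReal.ofReal_eq_zero]
    refine setIntegral_nonpos (hs.diff hJm) fun x hx => ?_
    have : ¬ 0 < f x := fun h => hx.2 ((hpos x).mp h)
    linarith
  rw [← h1, h2, add_zero, hd _ (hs.inter hJm)]

/-- unimodal likelihood ratio with right limit at the left endpoint
at least 1 implies the usual stochastic order. -/
theorem st_order_of_unimodal_right_limit_ge_one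
    (P Q : Measure ℝ) [IsProbabilityMeasure P] [IsProbabilityMeasure Q]
    (fP fQ : ℝ → ℝ)
    (hPd : ∀ s : Set ℝ, MeasurableSet s → P s = ENNReal.ofReal (∫ x in s, fP x))
    (hQd : ∀ s : Set ℝ, MeasurableSet s → Q s = ENNReal.ofReal (∫ x in s, fQ x))
    (J : Set ℝ) (hJ : J.OrdConnected) (x₀ : ℝ) (hx₀ : IsGLB J x₀)
    (hfP : ∀ x, 0 < fP x ↔ x ∈ J) (hfQ : ∀ x, 0 < fQ x ↔ x ∈ J)
    (ℓ : ℝ → ℝ) (hℓ : ∀ x ∈ J, ℓ x = fP x / fQ x)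
    (m : ℝ) (hm : m ∈ J)
    (hmono : MonotoneOn ℓ (J ∩ Iic m)) (hanti : AntitoneOn ℓ (J ∩ Ici m))
    (L : ℝ) (hlim : Tendsto ℓ (nhdsWithin x₀ (Ioi x₀)) (nhds L)) (hL : 1 ≤ L) :
    ∀ x : ℝ, P (Ici x) ≤ Q (Ici x) := by
  intro t
  have hJm : MeasurableSet J := hJ.measurableSet
  -- integrability
  have hPint : Integrable fP := by
    by_contra h
    have h1 : P univ = ENNReal.ofReal (∫ x in univ, fP x) := hPd univ MeasurableSet.univ
    rw [Measure.restrict_univ, integral_undef h] at h1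
    simp [measure_univ] at h1
  have hQint : Integrable fQ := by
    by_contra h
    have h1 : Q univ = ENNReal.ofReal (∫ x in univ, fQ x) := hQd univ MeasurableSet.univ
    rw [Measure.restrict_univ, integral_undef h] at h1
    simp [measure_univ] at h1
  -- a.e. avoid x₀
  have hne : ∀ s : Set ℝ, ∀ᵐ x ∂(volume.restrict s), x ≠ x₀ := by
    intro s
    rw [ae_iff]
    have h1 : {x : ℝ | ¬ x ≠ x₀} ⊆ {x₀} := by intro x hx; simpa using hx
    refine measure_mono_null h1 ?_
    rw [Measure.restrict_apply (measurableSet_singleton x₀)]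
    exact measure_mono_null inter_subset_left (measure_singleton x₀)
  -- interval structure: everything in (x₀, x] lies in J when x ∈ J
  have hIoc : ∀ x ∈ J, ∀ y : ℝ, x₀ < y → y ≤ x → y ∈ J := by
    intro x hxJ y hy1 hy2
    obtain ⟨j, hjJ, hjy⟩ : ∃ j ∈ J, j < y := by
      by_contra h
      push_neg at h
      exact absurd (hx₀.2 h) (not_le.mpr hy1)
    exact hJ.out hjJ hxJ ⟨hjy.le, hy2⟩
  -- ℓ ≥ 1 on the increasing part
  have hge1 : ∀ x ∈ J, x₀ < x → x ≤ m → 1 ≤ ℓ x := by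
    intro x hxJ hx₀x hxm
    have hev : ∀ᶠ y in nhdsWithin x₀ (Ioi x₀), ℓ y ≤ ℓ x := by
      filter_upwards [Ioo_mem_nhdsGT hx₀x] with y hy
      exact hmono ⟨hIoc x hxJ y hy.1 hy.2.le, hy.2.le.trans hxm⟩ ⟨hxJ, hxm⟩ hy.2.le
    have := le_of_tendsto hlim hev
    linarith
  by_cases hC : ∃ w, w ∈ J ∧ t ≤ w ∧ x₀ < w ∧ 1 ≤ ℓ w
  · -- some point to the right of t has ℓ ≥ 1; then ℓ ≥ 1 on J ∩ (x₀, t)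
    obtain ⟨w, hwJ, htw, hx₀w, hℓw⟩ := hC
    have h2 : Q (Iio t) ≤ P (Iio t) := by
      rw [aux_decomp P fP J hJm hPd hfP _ measurableSet_Iio,
          aux_decomp Q fQ J hJm hQd hfQ _ measurableSet_Iio]
      refine ENNReal.ofReal_le_ofReal ?_
      refine setIntegral_mono_ae_restrict hQint.integrableOn hPint.integrableOn ?_
      filter_upwards [hne _, ae_restrict_mem (measurableSet_Iio.inter hJm)] with x hxne hxs
      have hxJ : x ∈ J := hxs.2
      have hx₀x : x₀ < x := lt_of_le_of_ne (hx₀.1 hxJ) (Ne.symm hxne)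
      have hxt : x < t := hxs.1
      have h1ℓ : 1 ≤ ℓ x := by
        rcases le_or_gt x m with hxm | hmx
        · exact hge1 x hxJ hx₀x hxm
        · have := hanti ⟨hxJ, hmx.le⟩ ⟨hwJ, hmx.le.trans (hxt.le.trans htw)⟩
            (hxt.le.trans htw)
          linarith
      rw [hℓ x hxJ] at h1ℓ
      exact (one_le_div ((hfQ x).mpr hxJ)).mp h1ℓ
    have hPc : P (Ici t) = 1 - P (Iio t) := by
      rw [← compl_Iio, prob_compl_eq_one_sub measurableSet_Iio]
    have hQc : Q (Ici t) = 1 - Q (Iio t) := by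
      rw [← compl_Iio, prob_compl_eq_one_sub measurableSet_Iio]
    rw [hPc, hQc]
    exact tsub_le_tsub_left h2 1
  · -- ℓ < 1 on all of J ∩ [t, ∞) ∩ (x₀, ∞); compare directly
    push_neg at hC
    rw [aux_decomp P fP J hJm hPd hfP _ measurableSet_Ici,
        aux_decomp Q fQ J hJm hQd hfQ _ measurableSet_Ici]
    refine ENNReal.ofReal_le_ofReal ?_
    refine setIntegral_mono_ae_restrict hPint.integrableOn hQint.integrableOn ?_
    filter_upwards [hne _, ae_restrict_mem (measurableSet_Ici.inter hJm)] with x hxne hxs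
    have hxJ : x ∈ J := hxs.2
    have hx₀x : x₀ < x := lt_of_le_of_ne (hx₀.1 hxJ) (Ne.symm hxne)
    have hlt : ℓ x < 1 := hC x hxJ hxs.1 hx₀x
    rw [hℓ x hxJ] at hlt
    exact ((div_lt_one ((hfQ x).mpr hxJ)).mp hlt).le
end

section
/- Let P and Q be probability measures on ℝ with densities positive on a common interval J with finite left endpoint x₀ ∈ J, and suppose ℓ = f_P/f_Q is unimodal on J. If the right limit ℓ(x₀+) < 1, then P is not stochastically dominated by Q: there exists x with P([x,∞)) > Q([x,∞)). -/
open MeasureTheory Set Filter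

/-- A probability density (in the weak sense used here) integrates to `1`
and is integrable. -/
lemma density_aux (μ : Measure ℝ) [IsProbabilityMeasure μ] (f : ℝ → ℝ)
    (hd : ∀ s : Set ℝ, MeasurableSet s → μ s = ENNReal.ofReal (∫ x in s, f x)) :
    Integrable f ∧ ∫ x, f x = 1 := by
  have h := hd univ MeasurableSet.univ
  rw [measure_univ, Measure.restrict_univ] at h
  have hint1 : ∫ x, f x = 1 := ENNReal.ofReal_eq_one.mp h.symm
  refine ⟨?_, hint1⟩
  by_contra hni
  rw [integral_undef hni] at hint1
  norm_num at hint1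

/-- Set integrals of a density are at most `1`. -/
lemma density_le_one (μ : Measure ℝ) [IsProbabilityMeasure μ] (f : ℝ → ℝ)
    (hd : ∀ s : Set ℝ, MeasurableSet s → μ s = ENNReal.ofReal (∫ x in s, f x))
    (s : Set ℝ) (hs : MeasurableSet s) : ∫ x in s, f x ≤ 1 := by
  have h := hd s hs
  have := prob_le_one (μ := μ) (s := s)
  rw [h] at this
  exact ENNReal.ofReal_le_one.mp this

/-- unimodal likelihood ratio with right limit at the left endpoint
strictly below 1 implies failure of the usual stochastic order. -/
theorem not_st_order_of_unimodal_right_limit_lt_one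
    (P Q : Measure ℝ) [IsProbabilityMeasure P] [IsProbabilityMeasure Q]
    (fP fQ : ℝ → ℝ)
    (hPd : ∀ s : Set ℝ, MeasurableSet s → P s = ENNReal.ofReal (∫ x in s, fP x))
    (hQd : ∀ s : Set ℝ, MeasurableSet s → Q s = ENNReal.ofReal (∫ x in s, fQ x))
    (J : Set ℝ) (hJ : J.OrdConnected) (x₀ : ℝ) (hx₀ : IsLeast J x₀)
    (hfP : ∀ x, 0 < fP x ↔ x ∈ J) (hfQ : ∀ x, 0 < fQ x ↔ x ∈ J)
    (ℓ : ℝ → ℝ) (hℓ : ∀ x ∈ J, ℓ x = fP x / fQ x)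
    (m : ℝ) (hm : m ∈ J)
    (hmono : MonotoneOn ℓ (J ∩ Iic m)) (hanti : AntitoneOn ℓ (J ∩ Ici m))
    (L : ℝ) (hlim : Tendsto ℓ (nhdsWithin x₀ (Ioi x₀)) (nhds L)) (hL : L < 1) :
    ∃ x : ℝ, Q (Ici x) < P (Ici x) := by
  obtain ⟨hPint, hPone⟩ := density_aux P fP hPd
  obtain ⟨hQint, hQone⟩ := density_aux Q fQ hQd
  -- J contains a point strictly greater than x₀
  have hJt : ∃ t ∈ J, x₀ < t := by
    by_contra h
    push_neg at h
    -- then J ⊆ {x₀}, so fQ ≤ 0 away from x₀, contradicting ∫ fQ = 1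
    have hsub : J ⊆ {x₀} := by
      intro y hy
      exact le_antisymm (h y hy) (hx₀.2 hy)
    have hae : ∀ᵐ x : ℝ, x ≠ x₀ := by
      rw [ae_iff]
      simpa using measure_singleton (μ := (volume : Measure ℝ)) x₀
    have hle : ∀ᵐ x : ℝ, fQ x ≤ 0 := by
      filter_upwards [hae] with x hx
      by_contra hpos
      push_neg at hpos
      exact hx (hsub ((hfQ x).mp hpos))
    have : ∫ x, fQ x ≤ 0 := integral_nonpos_of_ae hle
    linarith
  obtain ⟨t, htJ, htx⟩ := hJt
  -- choose c with L < c < 1 and a window (x₀, u] on which ℓ < c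
  set c : ℝ := (1 + L) / 2 with hc
  have hLc : L < c := by rw [hc]; linarith
  have hc1 : c < 1 := by rw [hc]; linarith
  have hev : ∀ᶠ x in nhdsWithin x₀ (Ioi x₀), ℓ x < c :=
    hlim.eventually_lt_const hLc
  obtain ⟨u, hu, huIoc⟩ := mem_nhdsGT_iff_exists_Ioc_subset.mp hev
  -- the point a
  set a : ℝ := min u t with ha
  have hx₀a : x₀ < a := lt_min hu htx
  have haJ : a ∈ J := hJ.out hx₀.1 htJ ⟨hx₀a.le, min_le_right u t⟩
  -- points of Ioo x₀ a are in J and satisfy ℓ < c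
  have hIooJ : Ioo x₀ a ⊆ J := fun x hx =>
    hJ.out hx₀.1 haJ ⟨hx.1.le, hx.2.le⟩
  have hℓc : ∀ x ∈ Ioo x₀ a, ℓ x < c := fun x hx =>
    huIoc ⟨hx.1, hx.2.le.trans (min_le_left u t)⟩
  -- pointwise comparison on Ioo x₀ a : fP ≤ c * fQ
  have hptwise : ∀ x ∈ Ioo x₀ a, fP x ≤ c * fQ x := by
    intro x hx
    have hxJ := hIooJ hx
    have hfQx : 0 < fQ x := (hfQ x).mpr hxJ
    have hfPx : fP x = ℓ x * fQ x := by
      rw [hℓ x hxJ, div_mul_cancel₀ _ (ne_of_gt hfQx)]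
    rw [hfPx]
    exact mul_le_mul_of_nonneg_right (hℓc x hx).le hfQx.le
  -- integrals over Ioo x₀ a
  set JP : ℝ := ∫ x in Ioo x₀ a, fP x with hJP
  set JQ : ℝ := ∫ x in Ioo x₀ a, fQ x with hJQ
  have hJPle : JP ≤ c * JQ := by
    have : JP ≤ ∫ x in Ioo x₀ a, c * fQ x :=
      setIntegral_mono_on hPint.integrableOn
        (hQint.integrableOn.const_mul c) measurableSet_Ioo hptwise
    rwa [integral_const_mul] at this
  have hJQpos : 0 < JQ := by
    have hnonneg : 0 ≤ᶠ[ae (volume.restrict (Ioo x₀ a))] fQ := by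
      rw [EventuallyLE, ae_restrict_iff' measurableSet_Ioo]
      filter_upwards with x hx
      exact ((hfQ x).mpr (hIooJ hx)).le
    rw [hJQ, setIntegral_pos_iff_support_of_nonneg_ae hnonneg hQint.integrableOn]
    have hsup : Ioo x₀ a ⊆ Function.support fQ ∩ Ioo x₀ a := fun x hx =>
      ⟨ne_of_gt ((hfQ x).mpr (hIooJ hx)), hx⟩
    calc (0 : ENNReal) < ENNReal.ofReal (a - x₀) := by
            simp [hx₀a, sub_pos.mpr hx₀a]
      _ = volume (Ioo x₀ a) := (Real.volume_Ioo).symm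
      _ ≤ volume (Function.support fQ ∩ Ioo x₀ a) := measure_mono hsup
  -- integrals over Iic x₀
  set AP : ℝ := ∫ x in Iic x₀, fP x with hAP
  set AQ : ℝ := ∫ x in Iic x₀, fQ x with hAQ
  -- AP ≤ 0 since fP ≤ 0 a.e. on Iic x₀
  have hAPle : AP ≤ 0 := by
    have hae : ∀ᵐ x : ℝ, x ≠ x₀ := by
      rw [ae_iff]
      simpa using measure_singleton (μ := (volume : Measure ℝ)) x₀
    refine integral_nonpos_of_ae ?_
    rw [EventuallyLE, ae_restrict_iff' measurableSet_Iic]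
    filter_upwards [hae] with x hx hxle
    show fP x ≤ 0
    by_contra hpos
    push_neg at hpos
    have hxJ := (hfP x).mp hpos
    exact hx (le_antisymm hxle (hx₀.2 hxJ))
  -- AQ ≥ 0 : else Q (Ioi x₀) would exceed 1
  have hAQge : 0 ≤ AQ := by
    have hsplit : AQ + ∫ x in Ioi x₀, fQ x = 1 := by
      have := integral_add_compl (s := Iic x₀) measurableSet_Iic hQint (f := fQ)
      rwa [compl_Iic, hQone] at this
    have hle1 : ∫ x in Ioi x₀, fQ x ≤ 1 :=
      density_le_one Q fQ hQd _ measurableSet_Ioi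
    linarith
  -- decompose integrals over Iio a
  have hdecompP : ∫ x in Iio a, fP x = AP + JP := by
    rw [← Iic_union_Ioo_eq_Iio hx₀a,
      setIntegral_union ((Iic_disjoint_Ioi le_rfl).mono_right Ioo_subset_Ioi_self) measurableSet_Ioo
        hPint.integrableOn hPint.integrableOn]
  have hdecompQ : ∫ x in Iio a, fQ x = AQ + JQ := by
    rw [← Iic_union_Ioo_eq_Iio hx₀a,
      setIntegral_union ((Iic_disjoint_Ioi le_rfl).mono_right Ioo_subset_Ioi_self) measurableSet_Ioo
        hQint.integrableOn hQint.integrableOn]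
  set IP : ℝ := ∫ x in Iio a, fP x with hIP
  set IQ : ℝ := ∫ x in Iio a, fQ x with hIQ
  have hIQ1 : IQ ≤ 1 := density_le_one Q fQ hQd _ measurableSet_Iio
  have hJQle : JQ ≤ IQ := by rw [hdecompQ]; linarith
  have hcJQ : c * JQ < JQ := by
    nlinarith
  have hIPIQ : IP < IQ := by
    rw [hdecompP, hdecompQ]
    nlinarith
  -- tail integrals
  have hPtail : P (Ici a) = ENNReal.ofReal (1 - IP) := by
    rw [hPd (Ici a) measurableSet_Ici]
    congr 1
    have := integral_add_compl (s := Iio a) measurableSet_Iio hPint (f := fP)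
    rw [compl_Iio, hPone] at this
    linarith
  have hQtail : Q (Ici a) = ENNReal.ofReal (1 - IQ) := by
    rw [hQd (Ici a) measurableSet_Ici]
    congr 1
    have := integral_add_compl (s := Iio a) measurableSet_Iio hQint (f := fQ)
    rw [compl_Iio, hQone] at this
    linarith
  refine ⟨a, ?_⟩
  rw [hPtail, hQtail]
  have hpos : 0 < 1 - IP := by linarith
  exact (ENNReal.ofReal_lt_ofReal_iff hpos).mpr (by linarith)
end

section
/- Let P and Q be probability measures on ℝ with densities positive on a common interval J with finite left endpoint x₀, ℓ = f_P/f_Q unimodal on J, and assume P ≤_st Q and that the superlevel set {ℓ ≥ 1} is an initial interval of J. Then for every x ∈ J with Q([x,∞)) > 0, one has P([x,∞)) ≤ ℓ(x) · Q([x,∞)). -/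
open MeasureTheory Set

/-- under unimodality, the usual stochastic order and an initial
superlevel interval, the survival ratio is bounded by the likelihood ratio. -/
theorem survival_le_likelihood_mul_survival
    (P Q : Measure ℝ) [IsProbabilityMeasure P] [IsProbabilityMeasure Q]
    (fP fQ : ℝ → ℝ)
    (hPd : ∀ s : Set ℝ, MeasurableSet s → P s = ENNReal.ofReal (∫ x in s, fP x))
    (hQd : ∀ s : Set ℝ, MeasurableSet s → Q s = ENNReal.ofReal (∫ x in s, fQ x))
    (J : Set ℝ) (hJ : J.OrdConnected) (x₀ : ℝ) (hx₀ : IsGLB J x₀)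
    (hfP : ∀ x, 0 < fP x ↔ x ∈ J) (hfQ : ∀ x, 0 < fQ x ↔ x ∈ J)
    (ℓ : ℝ → ℝ) (hℓ : ∀ x ∈ J, ℓ x = fP x / fQ x)
    (m : ℝ) (hm : m ∈ J)
    (hmono : MonotoneOn ℓ (J ∩ Iic m)) (hanti : AntitoneOn ℓ (J ∩ Ici m))
    (hst : ∀ x : ℝ, P (Ici x) ≤ Q (Ici x))
    (hinitial : ∀ x ∈ J, ∀ y ∈ J, y ≤ x → 1 ≤ ℓ x → 1 ≤ ℓ y) :
    ∀ x ∈ J, 0 < Q (Ici x) →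
      (P (Ici x)).toReal ≤ ℓ x * (Q (Ici x)).toReal := by
  intro x hx hQpos
  have hJm : MeasurableSet J := hJ.measurableSet
  -- measures vanish off J
  have hcompl : ∀ (μ : Measure ℝ) (f : ℝ → ℝ),
      (∀ s : Set ℝ, MeasurableSet s → μ s = ENNReal.ofReal (∫ y in s, f y)) →
      (∀ y, 0 < f y ↔ y ∈ J) → μ Jᶜ = 0 := by
    intro μ f hd hf
    rw [hd _ hJm.compl, ENNReal.ofReal_eq_zero]
    exact setIntegral_nonpos hJm.compl fun y hy => le_of_not_gt (fun h => hy ((hf y).mp h))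
  have hsplit : ∀ (μ : Measure ℝ), μ Jᶜ = 0 → ∀ s : Set ℝ, MeasurableSet s →
      μ s = μ (s ∩ J) := by
    intro μ h0 s hs
    have h1 : μ (s \ J) = 0 :=
      le_antisymm (h0 ▸ measure_mono (fun y hy => hy.2)) zero_le
    rw [← measure_inter_add_diff s hJm, h1, add_zero]
  have hPc : P Jᶜ = 0 := hcompl P fP hPd hfP
  have hQc : Q Jᶜ = 0 := hcompl Q fQ hQd hfQ
  have hℓpos : ∀ y ∈ J, 0 < ℓ y := fun y hy => by
    rw [hℓ y hy]; exact div_pos ((hfP y).mpr hy) ((hfQ y).mpr hy)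
  by_cases hc : 1 ≤ ℓ x
  · calc (P (Ici x)).toReal ≤ (Q (Ici x)).toReal :=
          ENNReal.toReal_mono (measure_ne_top Q _) (hst x)
      _ ≤ ℓ x * (Q (Ici x)).toReal := le_mul_of_one_le_left ENNReal.toReal_nonneg hc
  push_neg at hc
  -- there is a point where ℓ ≥ 1
  have hzex : ∃ z ∈ J, 1 ≤ ℓ z := by
    by_contra h
    push_neg at h
    have hlt : ∀ z ∈ J, fP z < fQ z := fun z hzJ => by
      have h2 := h z hzJ
      rw [hℓ z hzJ] at h2
      exact (div_lt_one ((hfQ z).mpr hzJ)).mp h2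
    have hPJ : P J = 1 := by
      have := measure_add_measure_compl (μ := P) hJm
      rw [hPc, add_zero, measure_univ] at this; exact this
    have hQJ : Q J = 1 := by
      have := measure_add_measure_compl (μ := Q) hJm
      rw [hQc, add_zero, measure_univ] at this; exact this
    have hiP : ∫ y in J, fP y = 1 := by
      rw [hPd J hJm] at hPJ; exact ENNReal.ofReal_eq_one.mp hPJ
    have hiQ : ∫ y in J, fQ y = 1 := by
      rw [hQd J hJm] at hQJ; exact ENNReal.ofReal_eq_one.mp hQJ
    have hPint : IntegrableOn fP J := by
      by_contra hni
      rw [integral_undef hni] at hiP; norm_num at hiP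
    have hQint : IntegrableOn fQ J := by
      by_contra hni
      rw [integral_undef hni] at hiQ; norm_num at hiQ
    have hgint : IntegrableOn (fun y => fQ y - fP y) J := hQint.sub hPint
    have hg0 : ∫ y in J, (fQ y - fP y) = 0 := by
      rw [integral_sub hQint hPint, hiP, hiQ, sub_self]
    have hgnn : 0 ≤ᵐ[volume.restrict J] fun y => fQ y - fP y :=
      ae_restrict_of_forall_mem hJm fun y hy => sub_nonneg.mpr (hlt y hy).le
    have heq0 : (fun y => fQ y - fP y) =ᵐ[volume.restrict J] 0 :=
      (integral_eq_zero_iff_of_nonneg_ae hgnn hgint).mp hg0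
    have hfalse : ∀ᵐ y ∂(volume.restrict J), False := by
      filter_upwards [heq0, ae_restrict_mem hJm] with y h1 h2
      exact absurd h1 (ne_of_gt (sub_pos.mpr (hlt y h2)))
    have hre : volume.restrict J = 0 := by
      rwa [Filter.eventually_false_iff_eq_bot, ae_eq_bot] at hfalse
    rw [show (∫ y in J, fP y) = ∫ y, fP y ∂(volume.restrict J) from rfl, hre,
      integral_zero_measure] at hiP
    norm_num at hiP
  obtain ⟨z, hzJ, hz1⟩ := hzex
  -- x is past the mode
  have hxm : m ≤ x := by
    by_contra h
    push_neg at h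
    rcases le_total x z with hxz | hzx
    · exact absurd (hinitial z hzJ x hx hxz hz1) (not_le.mpr hc)
    · have := hmono ⟨hzJ, hzx.trans h.le⟩ ⟨hx, h.le⟩ hzx
      exact absurd (hz1.trans this) (not_le.mpr hc)
  have hkey : ∀ y ∈ J, x ≤ y → ℓ y ≤ ℓ x := fun y hy hxy =>
    hanti ⟨hx, hxm⟩ ⟨hy, hxm.trans hxy⟩ hxy
  set T : Set ℝ := Ici x ∩ J with hT
  have hTm : MeasurableSet T := measurableSet_Ici.inter hJm
  have hPT : P (Ici x) = P T := hsplit P hPc _ measurableSet_Ici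
  have hQT : Q (Ici x) = Q T := hsplit Q hQc _ measurableSet_Ici
  have hQint : IntegrableOn fQ T := by
    by_contra hni
    have h0 : Q T = 0 := by
      rw [hQd T hTm, integral_undef hni, ENNReal.ofReal_zero]
    rw [hQT, h0] at hQpos
    exact lt_irrefl 0 hQpos
  by_cases hPint : IntegrableOn fP T
  · have hmono' : ∫ y in T, fP y ≤ ∫ y in T, ℓ x * fQ y := by
      refine setIntegral_mono_on hPint (hQint.const_mul _) hTm fun y hy => ?_
      have hyJ := hy.2
      have hfQy := (hfQ y).mpr hyJ
      have heq : fP y = ℓ y * fQ y := by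
        rw [hℓ y hyJ, div_mul_cancel₀ _ (ne_of_gt hfQy)]
      rw [heq]
      exact mul_le_mul_of_nonneg_right (hkey y hyJ hy.1) hfQy.le
    have h1 : ∫ y in T, ℓ x * fQ y = ℓ x * ∫ y in T, fQ y := integral_const_mul _ _
    have hPnn : 0 ≤ ∫ y in T, fP y :=
      setIntegral_nonneg hTm fun y hy => ((hfP y).mpr hy.2).le
    have hQnn : 0 ≤ ∫ y in T, fQ y :=
      setIntegral_nonneg hTm fun y hy => ((hfQ y).mpr hy.2).le
    rw [hPT, hQT, hPd T hTm, hQd T hTm, ENNReal.toReal_ofReal hPnn,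
      ENNReal.toReal_ofReal hQnn]
    linarith
  · rw [hPT, hPd T hTm, integral_undef hPint, ENNReal.ofReal_zero]
    rw [ENNReal.toReal_zero]
    exact mul_nonneg (hℓpos x hx).le ENNReal.toReal_nonneg
end

section
/- Let P and Q be probability measures on ℤ with probability mass functions p, q positive on a common integer interval J with least element x₀, and suppose ℓ(k) = p(k)/q(k) is unimodal on J with ℓ(x₀) ≥ 1. Then P ≤_hr Q: the survival ratio T(k) = P([k,∞))/Q([k,∞)) is nonincreasing on {k ∈ J : Q([k,∞)) > 0}. -/
open MeasureTheory Set

/-- discrete case: unimodal likelihood ratio with ℓ(x₀) ≥ 1 implies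
the hazard-rate order (the survival ratio is nonincreasing where defined). -/
theorem discrete_hr_order_of_unimodal_endpoint
    (P Q : Measure ℤ) [IsProbabilityMeasure P] [IsProbabilityMeasure Q]
    (p q : ℤ → ℝ)
    (hp : ∀ k : ℤ, (P {k}).toReal = p k) (hq : ∀ k : ℤ, (Q {k}).toReal = q k)
    (J : Set ℤ) (hJ : J.OrdConnected) (x₀ : ℤ) (hx₀ : IsLeast J x₀)
    (hppos : ∀ k : ℤ, 0 < p k ↔ k ∈ J) (hqpos : ∀ k : ℤ, 0 < q k ↔ k ∈ J)
    (ℓ : ℤ → ℝ) (hℓ : ∀ k ∈ J, ℓ k = p k / q k)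
    (m : ℤ) (hm : m ∈ J)
    (hmono : MonotoneOn ℓ (J ∩ Iic m)) (hanti : AntitoneOn ℓ (J ∩ Ici m))
    (hend : 1 ≤ ℓ x₀) :
    AntitoneOn (fun k => (P (Ici k)).toReal / (Q (Ici k)).toReal)
      {k ∈ J | 0 < Q (Ici k)} := by
  obtain ⟨hx₀J, hleast⟩ := hx₀
  have hp0 : ∀ k, 0 ≤ p k := fun k => (hp k) ▸ ENNReal.toReal_nonneg
  have hq0 : ∀ k, 0 ≤ q k := fun k => (hq k) ▸ ENNReal.toReal_nonneg
  have hpz : ∀ k, k ∉ J → p k = 0 := fun k hk =>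
    le_antisymm (not_lt.1 fun h => hk ((hppos k).1 h)) (hp0 k)
  have hqz : ∀ k, k ∉ J → q k = 0 := fun k hk =>
    le_antisymm (not_lt.1 fun h => hk ((hqpos k).1 h)) (hq0 k)
  have hPk : ∀ k, P {k} = ENNReal.ofReal (p k) := fun k => by
    rw [← hp k, ENNReal.ofReal_toReal (measure_ne_top P _)]
  have hQk : ∀ k, Q {k} = ENNReal.ofReal (q k) := fun k => by
    rw [← hq k, ENNReal.ofReal_toReal (measure_ne_top Q _)]
  -- tsum representations
  have hdisj : ∀ s : Set ℤ, Pairwise (Function.onFun Disjoint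
      (fun j : s => ({(j : ℤ)} : Set ℤ))) := by
    intro s i j hij
    simp only [Function.onFun, Set.disjoint_singleton]
    exact Subtype.coe_injective.ne hij
  have htP : ∀ k : ℤ, P (Ici k) = ∑' j : (Ici k : Set ℤ), P {(j : ℤ)} := by
    intro k
    conv_lhs => rw [← Set.iUnion_of_singleton_coe (Ici k)]
    exact measure_iUnion (hdisj _) fun _ => measurableSet_singleton _
  have htQ : ∀ k : ℤ, Q (Ici k) = ∑' j : (Ici k : Set ℤ), Q {(j : ℤ)} := by
    intro k
    conv_lhs => rw [← Set.iUnion_of_singleton_coe (Ici k)]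
    exact measure_iUnion (hdisj _) fun _ => measurableSet_singleton _
  have hsP : ∀ k : ℤ, (P (Ici k)).toReal = ∑' j : (Ici k : Set ℤ), p (j : ℤ) := by
    intro k
    rw [htP k, ENNReal.tsum_toReal_eq fun j => measure_ne_top P _]
    exact tsum_congr fun j => hp _
  have hsQ : ∀ k : ℤ, (Q (Ici k)).toReal = ∑' j : (Ici k : Set ℤ), q (j : ℤ) := by
    intro k
    rw [htQ k, ENNReal.tsum_toReal_eq fun j => measure_ne_top Q _]
    exact tsum_congr fun j => hq _
  have hsumP : ∀ k : ℤ, Summable (fun j : (Ici k : Set ℤ) => p (j : ℤ)) := by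
    intro k
    have h := ENNReal.summable_toReal (f := fun j : (Ici k : Set ℤ) => P {(j : ℤ)})
      (by rw [← htP k]; exact measure_ne_top P _)
    simpa [hp] using h
  have hsumQ : ∀ k : ℤ, Summable (fun j : (Ici k : Set ℤ) => q (j : ℤ)) := by
    intro k
    have h := ENNReal.summable_toReal (f := fun j : (Ici k : Set ℤ) => Q {(j : ℤ)})
      (by rw [← htQ k]; exact measure_ne_top Q _)
    simpa [hq] using h
  -- positivity of tails on J
  have hQpos : ∀ k ∈ J, 0 < (Q (Ici k)).toReal := by
    intro k hk
    have h1 : Q {k} ≤ Q (Ici k) := measure_mono (by simp)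
    have h2 : (0 : ENNReal) < Q {k} := by
      rw [hQk k]; exact ENNReal.ofReal_pos.2 ((hqpos k).2 hk)
    exact ENNReal.toReal_pos (ne_of_gt (lt_of_lt_of_le h2 h1)) (measure_ne_top Q _)
  have hPnn : ∀ k : ℤ, 0 ≤ (P (Ici k)).toReal := fun _ => ENNReal.toReal_nonneg
  have hQnn : ∀ k : ℤ, 0 ≤ (Q (Ici k)).toReal := fun _ => ENNReal.toReal_nonneg
  -- one-step decomposition
  have hIci : ∀ k : ℤ, Ici k = {k} ∪ Ici (k + 1) := by
    intro k; ext j; simp; omega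
  have hdecP : ∀ k : ℤ, (P (Ici k)).toReal = p k + (P (Ici (k + 1))).toReal := by
    intro k
    rw [hIci k, measure_union (by simp [Set.disjoint_left]) (measurableSet_Ici),
      ENNReal.toReal_add (measure_ne_top P _) (measure_ne_top P _), hp]
  have hdecQ : ∀ k : ℤ, (Q (Ici k)).toReal = q k + (Q (Ici (k + 1))).toReal := by
    intro k
    rw [hIci k, measure_union (by simp [Set.disjoint_left]) (measurableSet_Ici),
      ENNReal.toReal_add (measure_ne_top Q _) (measure_ne_top Q _), hq]
  -- survival at x₀ is 1
  have hP1 : (P (Ici x₀)).toReal = 1 := by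
    have h0 : P (Iio x₀) = 0 := by
      rw [← Set.iUnion_of_singleton_coe (Iio x₀)]
      refine measure_iUnion_null fun j => ?_
      have hjJ : (j : ℤ) ∉ J := fun h => absurd (hleast h) (not_le.2 j.2)
      rw [hPk]; simp [hpz _ hjJ]
    have : P (Ici x₀) = 1 := by
      rw [← Set.compl_Iio, measure_compl measurableSet_Iio (measure_ne_top P _), h0]
      simp
    rw [this]; simp
  have hQ1 : (Q (Ici x₀)).toReal = 1 := by
    have h0 : Q (Iio x₀) = 0 := by
      rw [← Set.iUnion_of_singleton_coe (Iio x₀)]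
      refine measure_iUnion_null fun j => ?_
      have hjJ : (j : ℤ) ∉ J := fun h => absurd (hleast h) (not_le.2 j.2)
      rw [hQk]; simp [hqz _ hjJ]
    have : Q (Ici x₀) = 1 := by
      rw [← Set.compl_Iio, measure_compl measurableSet_Iio (measure_ne_top Q _), h0]
      simp
    rw [this]; simp
  -- KEY: for all k ∈ J, tail ratio is at most ℓ k
  have key : ∀ k ∈ J, (P (Ici k)).toReal ≤ ℓ k * (Q (Ici k)).toReal := by
    intro k hk
    rcases le_or_gt m k with hmk | hkm
    · -- decreasing side: compare termwise
      have hbound : ∀ j : (Ici k : Set ℤ), p (j : ℤ) ≤ ℓ k * q (j : ℤ) := by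
        rintro ⟨j, hj⟩
        simp only [Set.mem_Ici] at hj
        by_cases hjJ : j ∈ J
        · have hqj : 0 < q j := (hqpos j).2 hjJ
          have hle : ℓ j ≤ ℓ k := hanti ⟨hk, hmk⟩ ⟨hjJ, le_trans hmk hj⟩ hj
          have hpj : p j = ℓ j * q j := by rw [hℓ j hjJ]; field_simp
          rw [hpj]
          exact mul_le_mul_of_nonneg_right hle hqj.le
        · simp [hpz _ hjJ, hqz _ hjJ]
      calc (P (Ici k)).toReal = ∑' j : (Ici k : Set ℤ), p (j : ℤ) := hsP k
        _ ≤ ∑' j : (Ici k : Set ℤ), ℓ k * q (j : ℤ) :=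
            Summable.tsum_le_tsum hbound (hsumP k) ((hsumQ k).mul_left _)
        _ = ℓ k * ∑' j : (Ici k : Set ℤ), q (j : ℤ) := tsum_mul_left
        _ = ℓ k * (Q (Ici k)).toReal := by rw [hsQ k]
    · -- increasing side: induction from x₀
      have hE : ∀ n, x₀ ≤ n → n ∈ J → n ≤ m → (P (Ici n)).toReal ≤ ℓ n * (Q (Ici n)).toReal := by
        intro n hn
        refine Int.le_induction (motive := fun n _ => n ∈ J → n ≤ m →
          (P (Ici n)).toReal ≤ ℓ n * (Q (Ici n)).toReal) ?_ ?_ n hn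
        · intro _ _
          rw [hP1, hQ1, mul_one]; exact hend
        · intro n hn ih hn1J hn1m
          have hnJ : n ∈ J := hJ.out hx₀J hn1J ⟨hn, by omega⟩
          have hnm : n ≤ m := by omega
          have hIH := ih hnJ hnm
          have hbq : 0 < q n := (hqpos n).2 hnJ
          have hBQ : 0 < (Q (Ici (n + 1))).toReal := hQpos _ hn1J
          have hA : 0 ≤ (P (Ici (n + 1))).toReal := hPnn _
          have hrb : ℓ n * q n = p n := by rw [hℓ n hnJ]; field_simp
          have hlm : ℓ n ≤ ℓ (n + 1) :=
            hmono ⟨hnJ, hnm⟩ ⟨hn1J, hn1m⟩ (by omega)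
          rw [hdecP n, hdecQ n] at hIH
          nlinarith [mul_le_mul_of_nonneg_right hlm hBQ.le]
      exact hE k (hleast hk) hk hkm.le
  -- one-step monotonicity of the survival ratio
  have hstep : ∀ k, k ∈ J → (k + 1) ∈ J →
      (P (Ici (k + 1))).toReal / (Q (Ici (k + 1))).toReal ≤
      (P (Ici k)).toReal / (Q (Ici k)).toReal := by
    intro k hkJ hk1J
    have hb : 0 < q k := (hqpos k).2 hkJ
    have hB : 0 < (Q (Ici (k + 1))).toReal := hQpos _ hk1J
    have hA : 0 ≤ (P (Ici (k + 1))).toReal := hPnn _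
    have ha : 0 ≤ p k := hp0 k
    have hrb : ℓ k * q k = p k := by rw [hℓ k hkJ]; field_simp
    have hkey := key k hkJ
    rw [hdecP k, hdecQ k] at hkey ⊢
    rw [div_le_div_iff₀ hB (by linarith)]
    nlinarith
  -- conclude
  rintro k1 ⟨hk1J, -⟩ k2 ⟨hk2J, -⟩ h12
  simp only
  have : ∀ n, k1 ≤ n → n ∈ J →
      (P (Ici n)).toReal / (Q (Ici n)).toReal ≤
      (P (Ici k1)).toReal / (Q (Ici k1)).toReal := by
    intro n hn
    refine Int.le_induction (motive := fun n _ => n ∈ J →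
      (P (Ici n)).toReal / (Q (Ici n)).toReal ≤
      (P (Ici k1)).toReal / (Q (Ici k1)).toReal) ?_ ?_ n hn
    · intro _; exact le_refl _
    · intro n hn ih hn1J
      have hnJ : n ∈ J := hJ.out hk1J hn1J ⟨hn, by omega⟩
      exact le_trans (hstep n hnJ hn1J) (ih hnJ)
  exact this k2 h12 hk2J
end

section
/- For 0 < ν₁ < ν₂, the function g(x) = log(f_{ν₂}(x)/f_{ν₁}(x)), where f_ν is the half-Student density f_ν(x) = 2Γ((ν+1)/2)/(√(νπ) Γ(ν/2)) · (1 + x²/ν)^{−(ν+1)/2} on [0,∞), has derivative g'(x) = (ν₂−ν₁)·x·(1−x²) / ((ν₁+x²)(ν₂+x²)), which is positive on (0,1) and negative on (1,∞); consequently the likelihood ratio f_{ν₂}/f_{ν₁} is unimodal on [0,∞) with mode at x = 1. -/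
open Set Real

/-- The half-Student density with ν degrees of freedom. -/
noncomputable def halfStudentDensity (ν x : ℝ) : ℝ :=
  2 * Real.Gamma ((ν + 1) / 2) / (Real.sqrt (ν * Real.pi) * Real.Gamma (ν / 2)) *
    (1 + x ^ 2 / ν) ^ (-(ν + 1) / 2 : ℝ)

lemma hsd_pos {ν : ℝ} (hν : 0 < ν) (x : ℝ) : 0 < halfStudentDensity ν x := by
  unfold halfStudentDensity
  have h1 : 0 < Real.Gamma ((ν + 1) / 2) := Real.Gamma_pos_of_pos (by linarith)
  have h2 : 0 < Real.Gamma (ν / 2) := Real.Gamma_pos_of_pos (by linarith)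
  have h3 : 0 < Real.sqrt (ν * Real.pi) :=
    Real.sqrt_pos.mpr (mul_pos hν Real.pi_pos)
  have h4 : (0:ℝ) < 1 + x ^ 2 / ν := by positivity
  positivity

lemma hsd_log_deriv {ν : ℝ} (hν : 0 < ν) (x : ℝ) :
    HasDerivAt (fun y => Real.log (halfStudentDensity ν y))
      (-(ν + 1) * x / (ν + x ^ 2)) x := by
  set C := 2 * Real.Gamma ((ν + 1) / 2) / (Real.sqrt (ν * Real.pi) * Real.Gamma (ν / 2)) with hC
  have hCpos : 0 < C := by
    have h1 : 0 < Real.Gamma ((ν + 1) / 2) := Real.Gamma_pos_of_pos (by linarith)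
    have h2 : 0 < Real.Gamma (ν / 2) := Real.Gamma_pos_of_pos (by linarith)
    have h3 : 0 < Real.sqrt (ν * Real.pi) :=
      Real.sqrt_pos.mpr (mul_pos hν Real.pi_pos)
    positivity
  have hu : (0:ℝ) < 1 + x ^ 2 / ν := by positivity
  have hinner : HasDerivAt (fun y : ℝ => 1 + y ^ 2 / ν) (2 * x / ν) x := by
    have := ((hasDerivAt_pow 2 x).div_const ν).const_add 1
    simpa using this
  have hr : HasDerivAt (fun y : ℝ => (1 + y ^ 2 / ν) ^ (-(ν + 1) / 2 : ℝ))
      (2 * x / ν * (-(ν + 1) / 2) * (1 + x ^ 2 / ν) ^ ((-(ν + 1) / 2 : ℝ) - 1)) x :=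
    hinner.rpow_const (Or.inl (ne_of_gt hu))
  have hf : HasDerivAt (fun y => halfStudentDensity ν y)
      (C * (2 * x / ν * (-(ν + 1) / 2) * (1 + x ^ 2 / ν) ^ ((-(ν + 1) / 2 : ℝ) - 1))) x := by
    unfold halfStudentDensity
    exact hr.const_mul C
  have hfx : halfStudentDensity ν x ≠ 0 := (hsd_pos hν x).ne'
  have := hf.log hfx
  convert this using 1
  have hrp : (0:ℝ) < (1 + x ^ 2 / ν) ^ (-(ν + 1) / 2 : ℝ) := Real.rpow_pos_of_pos hu _
  have hsub : (1 + x ^ 2 / ν) ^ ((-(ν + 1) / 2 : ℝ) - 1)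
      = (1 + x ^ 2 / ν) ^ (-(ν + 1) / 2 : ℝ) / (1 + x ^ 2 / ν) :=
    Real.rpow_sub_one (ne_of_gt hu) _
  unfold halfStudentDensity
  rw [hsub, ← hC]
  have hνx : ν + x ^ 2 ≠ 0 := by positivity
  field_simp

/-- the log-likelihood ratio of half-Student densities has the
stated derivative, positive on (0,1) and negative on (1,∞), and the likelihood
ratio is unimodal with mode at 1. -/
theorem halfStudent_likelihood_unimodal
    (ν₁ ν₂ : ℝ) (hν₁ : 0 < ν₁) (hν : ν₁ < ν₂) :
    (∀ x : ℝ, 0 < x →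
      HasDerivAt (fun y => Real.log (halfStudentDensity ν₂ y / halfStudentDensity ν₁ y))
        ((ν₂ - ν₁) * x * (1 - x ^ 2) / ((ν₁ + x ^ 2) * (ν₂ + x ^ 2))) x) ∧
    (∀ x ∈ Ioo (0 : ℝ) 1,
      0 < (ν₂ - ν₁) * x * (1 - x ^ 2) / ((ν₁ + x ^ 2) * (ν₂ + x ^ 2))) ∧
    (∀ x ∈ Ioi (1 : ℝ),
      (ν₂ - ν₁) * x * (1 - x ^ 2) / ((ν₁ + x ^ 2) * (ν₂ + x ^ 2)) < 0) ∧
    MonotoneOn (fun y => halfStudentDensity ν₂ y / halfStudentDensity ν₁ y) (Icc 0 1) ∧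
    AntitoneOn (fun y => halfStudentDensity ν₂ y / halfStudentDensity ν₁ y) (Ici 1) := by
  have hν₂ : 0 < ν₂ := lt_trans hν₁ hν
  have hratio_pos : ∀ y, 0 < halfStudentDensity ν₂ y / halfStudentDensity ν₁ y :=
    fun y => div_pos (hsd_pos hν₂ y) (hsd_pos hν₁ y)
  have hfeq : (fun y => Real.log (halfStudentDensity ν₂ y / halfStudentDensity ν₁ y))
      = fun y => Real.log (halfStudentDensity ν₂ y) - Real.log (halfStudentDensity ν₁ y) := by
    funext y
    exact Real.log_div (hsd_pos hν₂ y).ne' (hsd_pos hν₁ y).ne'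
  have hd : ∀ x : ℝ,
      HasDerivAt (fun y => Real.log (halfStudentDensity ν₂ y / halfStudentDensity ν₁ y))
        ((ν₂ - ν₁) * x * (1 - x ^ 2) / ((ν₁ + x ^ 2) * (ν₂ + x ^ 2))) x := by
    intro x
    rw [hfeq]
    have h2 := hsd_log_deriv hν₂ x
    have h1 := hsd_log_deriv hν₁ x
    have := h2.sub h1
    convert this using 1
    · rfl
    · rfl
    · rfl
    have hn1 : ν₁ + x ^ 2 ≠ 0 := by positivity
    have hn2 : ν₂ + x ^ 2 ≠ 0 := by positivity
    field_simp
    ring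
  have hpos : ∀ x ∈ Ioo (0 : ℝ) 1,
      0 < (ν₂ - ν₁) * x * (1 - x ^ 2) / ((ν₁ + x ^ 2) * (ν₂ + x ^ 2)) := by
    rintro x ⟨hx0, hx1⟩
    have h1 : (0:ℝ) < 1 - x ^ 2 := by nlinarith
    have hden : (0:ℝ) < (ν₁ + x ^ 2) * (ν₂ + x ^ 2) := by positivity
    exact div_pos (mul_pos (mul_pos (by linarith) hx0) h1) hden
  have hneg : ∀ x ∈ Ioi (1 : ℝ),
      (ν₂ - ν₁) * x * (1 - x ^ 2) / ((ν₁ + x ^ 2) * (ν₂ + x ^ 2)) < 0 := by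
    intro x hx
    simp only [mem_Ioi] at hx
    have h1 : (1 - x ^ 2 : ℝ) < 0 := by nlinarith
    have hden : (0:ℝ) < (ν₁ + x ^ 2) * (ν₂ + x ^ 2) := by positivity
    apply div_neg_of_neg_of_pos _ hden
    have : (0:ℝ) < (ν₂ - ν₁) * x := mul_pos (by linarith) (by linarith)
    nlinarith
  have hdiff : Differentiable ℝ
      (fun y => Real.log (halfStudentDensity ν₂ y / halfStudentDensity ν₁ y)) :=
    fun x => (hd x).differentiableAt
  have hderiv : ∀ x, deriv
      (fun y => Real.log (halfStudentDensity ν₂ y / halfStudentDensity ν₁ y)) x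
      = (ν₂ - ν₁) * x * (1 - x ^ 2) / ((ν₁ + x ^ 2) * (ν₂ + x ^ 2)) :=
    fun x => (hd x).deriv
  refine ⟨fun x _ => hd x, hpos, hneg, ?_, ?_⟩
  · have hlog : MonotoneOn
        (fun y => Real.log (halfStudentDensity ν₂ y / halfStudentDensity ν₁ y)) (Icc 0 1) := by
      apply monotoneOn_of_deriv_nonneg (convex_Icc 0 1) hdiff.continuous.continuousOn
        hdiff.differentiableOn
      intro x hx
      rw [interior_Icc] at hx
      rw [hderiv]
      exact le_of_lt (hpos x hx)
    intro a ha b hb hab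
    have := hlog ha hb hab
    exact (Real.log_le_log_iff (hratio_pos a) (hratio_pos b)).mp this
  · have hlog : AntitoneOn
        (fun y => Real.log (halfStudentDensity ν₂ y / halfStudentDensity ν₁ y)) (Ici 1) := by
      apply antitoneOn_of_deriv_nonpos (convex_Ici 1) hdiff.continuous.continuousOn
        hdiff.differentiableOn
      intro x hx
      rw [interior_Ici] at hx
      rw [hderiv]
      exact le_of_lt (hneg x hx)
    intro a ha b hb hab
    have := hlog ha hb hab
    exact (Real.log_le_log_iff (hratio_pos b) (hratio_pos a)).mp this
end

section
/- The value at zero of the half-Student density, ν ↦ f_ν(0) = 2Γ((ν+1)/2)/(√(νπ)·Γ(ν/2)), is strictly increasing in ν on (0,∞). -/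
open Set Filter Finset Topology

/-- Log-form approximant to `log Γ(x+1/2) - log Γ(x) - (1/2) log x` coming from
Euler's limit formula for the Gamma function. -/
noncomputable def Gaux (n : ℕ) (x : ℝ) : ℝ :=
  (1/2) * Real.log (x + n) - (1/2) * Real.log x
    - ∑ k ∈ Finset.range (n+1), (Real.log (x + 1/2 + k) - Real.log (x + k))

/-- A strictly increasing "gap" function whose derivative `1/(4x(x+1/2)(x+1))` is a
lower bound for the derivative of each `Gaux n`. -/
noncomputable def Kaux (x : ℝ) : ℝ :=
  (1/2) * Real.log x + (1/2) * Real.log (x + 1) - Real.log (x + 1/2)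

/-- The limit function `log Γ(x+1/2) - log Γ(x) - (1/2) log x`. -/
noncomputable def Haux (x : ℝ) : ℝ :=
  Real.log (Real.Gamma (x + 1/2)) - Real.log (Real.Gamma x) - (1/2) * Real.log x

lemma hasDerivAt_log_add (c : ℝ) {x : ℝ} (h : x + c ≠ 0) :
    HasDerivAt (fun y : ℝ => Real.log (y + c)) (x + c)⁻¹ x := by
  simpa using ((hasDerivAt_id x).add_const c).log h

lemma hasDerivAt_Kaux {x : ℝ} (hx : 0 < x) :
    HasDerivAt Kaux ((1/2) * x⁻¹ + (1/2) * (x + 1)⁻¹ - (x + 1/2)⁻¹) x := by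
  have h1 : HasDerivAt (fun y : ℝ => Real.log y) x⁻¹ x := Real.hasDerivAt_log hx.ne'
  have h2 := hasDerivAt_log_add 1 (by positivity : x + 1 ≠ 0)
  have h3 := hasDerivAt_log_add (1/2) (by positivity : x + 1/2 ≠ 0)
  exact ((h1.const_mul (1/2)).add (h2.const_mul (1/2))).sub h3

lemma hasDerivAt_Gaux (n : ℕ) {x : ℝ} (hx : 0 < x) :
    HasDerivAt (Gaux n)
      ((1/2) * (x + n)⁻¹ - (1/2) * x⁻¹
        - ∑ k ∈ Finset.range (n+1), ((x + 1/2 + k)⁻¹ - (x + k)⁻¹)) x := by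
  have h1 := hasDerivAt_log_add (n : ℝ) (by positivity : x + (n:ℝ) ≠ 0)
  have h2 : HasDerivAt (fun y : ℝ => Real.log y) x⁻¹ x := Real.hasDerivAt_log hx.ne'
  have h3 : HasDerivAt
      (fun y : ℝ => ∑ k ∈ Finset.range (n+1), (Real.log (y + 1/2 + k) - Real.log (y + k)))
      (∑ k ∈ Finset.range (n+1), ((x + 1/2 + k)⁻¹ - (x + k)⁻¹)) x := by
    apply HasDerivAt.fun_sum
    intro k _
    have ha := hasDerivAt_log_add (1/2 + k) (by positivity : x + (1/2 + k) ≠ 0)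
    have hb := hasDerivAt_log_add (k : ℝ) (by positivity : x + (k:ℝ) ≠ 0)
    have := ha.fun_sub hb
    simpa [add_assoc] using this
  exact ((h1.const_mul (1/2)).sub (h2.const_mul (1/2))).sub h3

/-- Key derivative inequality: the derivative of `Gaux n` dominates that of `Kaux`. -/
lemma deriv_Gaux_ge {x : ℝ} (hx : 0 < x) (n : ℕ) :
    (1/2) * x⁻¹ + (1/2) * (x + 1)⁻¹ - (x + 1/2)⁻¹ ≤
      (1/2) * (x + n)⁻¹ - (1/2) * x⁻¹
        - ∑ k ∈ Finset.range (n+1), ((x + 1/2 + k)⁻¹ - (x + k)⁻¹) := by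
  have hsum : ∑ k ∈ Finset.range (n+1), ((x + k)⁻¹ - (x + 1/2 + k)⁻¹) ≥
      ((1/2) * x⁻¹ + (1/2) * (x + 1)⁻¹ - (x + 1/2)⁻¹)
        + (1/2) * x⁻¹ - (1/2) * (x + n + 1)⁻¹ := by
    rw [Finset.sum_range_succ']
    have hre : ∀ i : ℕ, ((x + ↑(i+1))⁻¹ - (x + 1/2 + ↑(i+1))⁻¹)
        = ((x + i + 1)⁻¹ - (x + i + 1 + 1/2)⁻¹) := by
      intro i; push_cast; ring_nf
    simp only [hre]
    have tail : ∑ i ∈ Finset.range n,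
        ((1/2) * (x + i + 1)⁻¹ - (1/2) * (x + (i+1) + 1)⁻¹) ≤
        ∑ i ∈ Finset.range n, ((x + i + 1)⁻¹ - (x + i + 1 + 1/2)⁻¹) := by
      apply Finset.sum_le_sum
      intro i _
      have key : ((x + i + 1)⁻¹ - (x + i + 1 + 1/2)⁻¹)
          - ((1/2) * (x + i + 1)⁻¹ - (1/2) * (x + (i+1) + 1)⁻¹)
          = 1 / (4 * ((x + i + 1) * (x + i + 1 + 1/2) * (x + i + 2))) := by
        have h1 : (x + i + 1 : ℝ) ≠ 0 := by positivity
        have h2 : (x + i + 1 + 1/2 : ℝ) ≠ 0 := by positivity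
        have h3 : (x + i + 2 : ℝ) ≠ 0 := by positivity
        field_simp
        ring
      have hpos : (0:ℝ) < 1 / (4 * ((x + i + 1) * (x + i + 1 + 1/2) * (x + i + 2))) := by
        positivity
      linarith [key, hpos]
    have tel : ∑ i ∈ Finset.range n,
        ((1/2) * (x + i + 1)⁻¹ - (1/2) * (x + (i+1) + 1)⁻¹)
        = (1/2) * (x + 0 + 1)⁻¹ - (1/2) * (x + n + 1)⁻¹ := by
      have h := Finset.sum_range_sub' (fun i : ℕ => (1/2) * (x + i + 1)⁻¹) n
      convert h using 2 <;> push_cast <;> ring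
    simp only [add_zero] at tel
    simp only [Nat.cast_zero, add_zero]
    linarith [tail, tel.le, tel.ge]
  have hneg : ∑ k ∈ Finset.range (n+1), ((x + 1/2 + k)⁻¹ - (x + k)⁻¹)
      = -(∑ k ∈ Finset.range (n+1), ((x + k)⁻¹ - (x + 1/2 + k)⁻¹)) := by
    rw [← Finset.sum_neg_distrib]
    simp
  have hmono : (x + n + 1)⁻¹ ≤ (x + n)⁻¹ :=
    inv_anti₀ (by positivity) (by linarith)
  rw [hneg]
  linarith [hsum, hmono]

lemma monotoneOn_Gaux_sub_Kaux (n : ℕ) :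
    MonotoneOn (fun y => Gaux n y - Kaux y) (Ioi (0:ℝ)) := by
  have hder : ∀ x ∈ Ioi (0:ℝ), HasDerivAt (fun y => Gaux n y - Kaux y)
      (((1/2) * (x + n)⁻¹ - (1/2) * x⁻¹
        - ∑ k ∈ Finset.range (n+1), ((x + 1/2 + k)⁻¹ - (x + k)⁻¹))
        - ((1/2) * x⁻¹ + (1/2) * (x + 1)⁻¹ - (x + 1/2)⁻¹)) x := by
    intro x hx
    exact (hasDerivAt_Gaux n hx).sub (hasDerivAt_Kaux hx)
  apply monotoneOn_of_deriv_nonneg (convex_Ioi 0)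
  · intro x hx
    exact (hder x hx).continuousAt.continuousWithinAt
  · rw [interior_Ioi]
    intro x hx
    exact (hder x hx).differentiableAt.differentiableWithinAt
  · rw [interior_Ioi]
    intro x hx
    rw [(hder x hx).deriv]
    have := deriv_Gaux_ge hx n
    linarith

lemma strictMonoOn_Kaux : StrictMonoOn Kaux (Ioi (0:ℝ)) := by
  apply strictMonoOn_of_deriv_pos (convex_Ioi 0)
  · intro x hx
    exact (hasDerivAt_Kaux hx).continuousAt.continuousWithinAt
  · rw [interior_Ioi]
    intro x hx
    have hx' : (0:ℝ) < x := hx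
    rw [(hasDerivAt_Kaux hx').deriv]
    have key : (1/2) * x⁻¹ + (1/2) * (x + 1)⁻¹ - (x + 1/2)⁻¹
        = 1 / (4 * (x * (x + 1/2) * (x + 1))) := by
      have h1 : (x : ℝ) ≠ 0 := hx'.ne'
      have h2 : (x + 1/2 : ℝ) ≠ 0 := by positivity
      have h3 : (x + 1 : ℝ) ≠ 0 := by positivity
      have h4 : (2*x + 1 : ℝ) ≠ 0 := by positivity
      field_simp
      ring
    rw [key]
    positivity

lemma log_gammaSeq {s : ℝ} (hs : 0 < s) {n : ℕ} (hn : 0 < n) :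
    Real.log (Real.GammaSeq s n) =
      s * Real.log n + Real.log (n.factorial)
        - ∑ j ∈ Finset.range (n+1), Real.log (s + j) := by
  have hn' : (0:ℝ) < n := by exact_mod_cast hn
  have hfac : ((n.factorial : ℝ)) ≠ 0 := by
    exact_mod_cast n.factorial_ne_zero
  have hprod : ∀ j ∈ Finset.range (n+1), (s + (j:ℝ)) ≠ 0 := by
    intro j _; positivity
  have hprod' : (∏ j ∈ Finset.range (n+1), (s + (j:ℝ))) ≠ 0 :=
    Finset.prod_ne_zero_iff.2 hprod
  have hpow : ((n:ℝ) ^ s) ≠ 0 := by positivity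
  rw [Real.GammaSeq, Real.log_div (by exact mul_ne_zero hpow hfac) hprod',
    Real.log_mul hpow hfac, Real.log_rpow hn', Real.log_prod hprod]

lemma tendsto_Gaux {x : ℝ} (hx : 0 < x) :
    Tendsto (fun n => Gaux n x) atTop (𝓝 (Haux x)) := by
  have hΓ1 : Tendsto (fun n => Real.log (Real.GammaSeq (x + 1/2) n)) atTop
      (𝓝 (Real.log (Real.Gamma (x + 1/2)))) :=
    (Real.GammaSeq_tendsto_Gamma (x + 1/2)).log
      (Real.Gamma_pos_of_pos (by positivity)).ne'
  have hΓ2 : Tendsto (fun n => Real.log (Real.GammaSeq x n)) atTop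
      (𝓝 (Real.log (Real.Gamma x))) :=
    (Real.GammaSeq_tendsto_Gamma x).log (Real.Gamma_pos_of_pos hx).ne'
  have hz : Tendsto (fun n : ℕ => (x + n) / n) atTop (𝓝 1) := by
    have h0 : Tendsto (fun n : ℕ => x / n + 1) atTop (𝓝 1) := by
      simpa using (tendsto_const_div_atTop_nhds_zero_nat x).add tendsto_const_nhds
    apply h0.congr'
    filter_upwards [eventually_ge_atTop 1] with n hn
    have hn' : (n:ℝ) ≠ 0 := by
      exact_mod_cast Nat.one_le_iff_ne_zero.1 hn
    field_simp
  have hlog : Tendsto (fun n : ℕ => (1/2) * Real.log ((x + n) / n)) atTop (𝓝 0) := by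
    have := (hz.log one_ne_zero).const_mul (1/2)
    simpa using this
  have hcomb : Tendsto
      (fun n : ℕ => Real.log (Real.GammaSeq (x + 1/2) n) - Real.log (Real.GammaSeq x n)
        - (1/2) * Real.log x + (1/2) * Real.log ((x + n) / n)) atTop (𝓝 (Haux x)) := by
    have hconst : Tendsto (fun _ : ℕ => (1/2) * Real.log x) atTop
        (𝓝 ((1/2) * Real.log x)) := tendsto_const_nhds
    have := ((hΓ1.sub hΓ2).sub hconst).add hlog
    simpa [Haux] using this
  apply hcomb.congr'
  filter_upwards [eventually_ge_atTop 1] with n hn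
  have hn0 : 0 < n := hn
  have hn' : (0:ℝ) < n := by exact_mod_cast hn0
  rw [Gaux, log_gammaSeq (by positivity) hn0, log_gammaSeq hx hn0,
    Real.log_div (by positivity) (by positivity), Finset.sum_sub_distrib]
  ring

/-- `Haux` increases with an explicit `Kaux`-gap. -/
lemma Haux_lt_Haux {a b : ℝ} (ha : 0 < a) (hb : 0 < b) (hab : a < b) :
    Haux a < Haux b := by
  have hmono : ∀ n : ℕ, Gaux n a - Kaux a ≤ Gaux n b - Kaux b := fun n =>
    monotoneOn_Gaux_sub_Kaux n (Set.mem_Ioi.2 ha) (Set.mem_Ioi.2 hb) hab.le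
  have hlim : Haux a - Kaux a ≤ Haux b - Kaux b :=
    le_of_tendsto_of_tendsto' ((tendsto_Gaux ha).sub tendsto_const_nhds)
      ((tendsto_Gaux hb).sub tendsto_const_nhds) hmono
  have hK : Kaux a < Kaux b := strictMonoOn_Kaux (Set.mem_Ioi.2 ha) (Set.mem_Ioi.2 hb) hab
  linarith

lemma density_eq {ν : ℝ} (hν : 0 < ν) :
    2 * Real.Gamma ((ν + 1) / 2) / (Real.sqrt (ν * Real.pi) * Real.Gamma (ν / 2))
      = (2 / Real.sqrt (2 * Real.pi)) * Real.exp (Haux (ν / 2)) := by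
  set X := ν / 2 with hX
  have hX0 : 0 < X := by positivity
  have e1 : (ν + 1) / 2 = X + 1/2 := by rw [hX]; ring
  have hsqrt : Real.sqrt (ν * Real.pi) = Real.sqrt (2 * Real.pi) * Real.sqrt X := by
    rw [← Real.sqrt_mul (by positivity : (0:ℝ) ≤ 2 * Real.pi)]
    congr 1
    rw [hX]; ring
  have hexp : Real.exp (Haux X) = Real.Gamma (X + 1/2) / Real.Gamma X / Real.sqrt X := by
    rw [Haux, Real.exp_sub, Real.exp_sub,
      Real.exp_log (Real.Gamma_pos_of_pos (by positivity)),
      Real.exp_log (Real.Gamma_pos_of_pos hX0),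
      show (1/2) * Real.log X = Real.log (Real.sqrt X) by
        rw [Real.log_sqrt hX0.le]; ring,
      Real.exp_log (Real.sqrt_pos.2 hX0)]
  rw [e1, hsqrt, hexp]
  have h1 : Real.Gamma X ≠ 0 := (Real.Gamma_pos_of_pos hX0).ne'
  have h2 : Real.sqrt X ≠ 0 := (Real.sqrt_pos.2 hX0).ne'
  have h3 : Real.sqrt (2 * Real.pi) ≠ 0 := by
    have := Real.pi_pos
    positivity
  field_simp

/-- the value at zero of the half-Student density,
ν ↦ 2Γ((ν+1)/2)/(√(νπ)·Γ(ν/2)), is strictly increasing on (0,∞). -/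
theorem halfStudent_density_at_zero_strictMono :
    StrictMonoOn
      (fun ν : ℝ =>
        2 * Real.Gamma ((ν + 1) / 2) / (Real.sqrt (ν * Real.pi) * Real.Gamma (ν / 2)))
      (Ioi 0) := by
  intro a ha b hb hab
  rw [Set.mem_Ioi] at ha hb
  simp only
  rw [density_eq ha, density_eq hb]
  have hc : 0 < 2 / Real.sqrt (2 * Real.pi) := by
    have := Real.pi_pos
    positivity
  have hH : Haux (a / 2) < Haux (b / 2) :=
    Haux_lt_Haux (by positivity) (by positivity) (by linarith)
  exact mul_lt_mul_of_pos_left (Real.exp_lt_exp.2 hH) hc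
end
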